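/- For every q ∈ C with 0 < |q| < 1 the Jacobi derivative formula holds: 2·Σ_{n=0}^∞ (−1)^n (2n+1) q^{(n+1/2)²} = θ_2(0,q)·θ_3(0,q)·θ_4(0,q); that is, θ_1'(0,q) = θ_2(0,q)θ_3(0,q)θ_4(0,q), where θ_1' is the derivative of θ_1(z,q) with respect to z. -/

import Mathlib

/-- The theta constant `θ₂(0,q) = Σ_{n∈ℤ} q^{(n+1/2)²}`, where half-integer powers of `q`
are taken with the principal branch of the complex logarithm. -/
noncomputable def thetaTwo (q : ℂ) : ℂ := ∑' n : ℤ, q ^ (((n : ℂ) + 1 / 2) ^ 2)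

/-- The theta constant `θ₃(0,q) = Σ_{n∈ℤ} q^{n²}`. -/
noncomputable def thetaThree (q : ℂ) : ℂ := ∑' n : ℤ, q ^ (n ^ 2)

/-- The theta constant `θ₄(0,q) = Σ_{n∈ℤ} (-1)^n q^{n²}`. -/
noncomputable def thetaFour (q : ℂ) : ℂ := ∑' n : ℤ, (-1 : ℂ) ^ n * q ^ (n ^ 2)

/-!
Write `θ₁'(0,q) = q^{1/4} A(q)` and `θ₂(0,q) = q^{1/4} B(q)`, where `A`, `B`, `θ₃ = θ₃(0,·)` and
`θ₄ = θ₄(0,·)` are series in integral powers of `q`. Splitting a Cauchy product of two series over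
`ℤ` according to the parity of the difference of the indices gives the duplication formulas
`A(x) B(x) = 2 A(x²) θ₄(x²)`, `B(x)² = 2 B(x²) θ₃(x²)` and `θ₃(x) θ₄(x) = θ₄(x²)²`; the cross terms
carry the factor `Σ (-1)ⁿ y^{n²+n} = 0`. Hence the defect `E = A - B θ₃ θ₄` satisfies
`E(x) B(x) = 2 θ₄(x²) E(x²)`. As `E(0) = 0` and `B(0) = 2`, a zero of finite order `k ≥ 1` at `0`
would have order `2k` on the right-hand side, so `E` vanishes near `0`, hence on the unit disc by
the identity theorem.
-/

open Filter Topology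

namespace JacobiDerivativeFormula

section IntSums

theorem tsum_int_eq_zero_of_antisymm {E : Type*} [AddCommGroup E] [TopologicalSpace E]
    [IsTopologicalAddGroup E] [T2Space E] [IsAddTorsionFree E] {f : ℤ → E}
    (h : ∀ n, f (-(n + 1)) = -f n) : ∑' n, f n = 0 := by
  have hsymm : ∑' n, f n = -∑' n, f n := by
    rw [← tsum_neg, ← (Equiv.subLeft (-1 : ℤ)).tsum_eq]
    exact tsum_congr fun n => (congrArg f (show -1 - n = -(n + 1) by ring)).trans (h n)
  exact self_eq_neg.mp hsymm

theorem tsum_int_eq_two_mul_tsum_nat {R : Type*} [NormedRing R] [CompleteSpace R] {f : ℤ → R}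
    (hf : Summable f) (h : ∀ n, f (-(n + 1)) = f n) : ∑' n, f n = 2 * ∑' n : ℕ, f n := by
  rw [tsum_of_nat_of_neg_add_one (hf.comp_injective Nat.cast_injective)
    ((hf.comp_injective (neg_injective.comp (add_left_injective 1))).comp_injective
      Nat.cast_injective)]
  simp only [h, two_mul]

def parityEquiv : (ℤ × ℤ) ⊕ (ℤ × ℤ) ≃ ℤ × ℤ where
  toFun := Sum.elim (fun p => (p.1 + p.2, p.1 - p.2)) (fun p => (p.1 + p.2, p.1 - p.2 - 1))
  invFun p := if (p.1 + p.2) % 2 = 0 then .inl ((p.1 + p.2) / 2, (p.1 - p.2) / 2)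
    else .inr ((p.1 + p.2 + 1) / 2, (p.1 - p.2 - 1) / 2)
  left_inv := by
    rintro (⟨a, b⟩ | ⟨a, b⟩) <;> dsimp only [Sum.elim_inl, Sum.elim_inr] <;> split_ifs <;>
      first | omega | simp only [Sum.inl.injEq, Sum.inr.injEq, Prod.mk.injEq]; omega
  right_inv := by
    rintro ⟨m, n⟩
    dsimp only
    split_ifs <;> simp only [Sum.elim_inl, Sum.elim_inr, Prod.mk.injEq] <;> omega

theorem tsum_mul_tsum_eq_add_of_parity {R : Type*} [NormedRing R] [CompleteSpace R]
    {f g : ℤ → R} (hf : Summable fun n => ‖f n‖) (hg : Summable fun n => ‖g n‖) :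
    (∑' m, f m) * (∑' n, g n) = (∑' p : ℤ × ℤ, f (p.1 + p.2) * g (p.1 - p.2))
      + ∑' p : ℤ × ℤ, f (p.1 + p.2) * g (p.1 - p.2 - 1) := by
  have hfg : Summable ((fun p : ℤ × ℤ => f p.1 * g p.2) ∘ parityEquiv) :=
    parityEquiv.summable_iff.mpr (hf.mul_norm hg).of_norm
  rw [tsum_mul_tsum_of_summable_norm hf hg, ← parityEquiv.tsum_eq]
  exact Summable.tsum_sum (hfg.comp_injective Sum.inl_injective)
    (hfg.comp_injective Sum.inr_injective)

theorem tsum_prod_eq_mul {R ι κ : Type*} [NormedRing R] [CompleteSpace R] {F : ι × κ → R}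
    {f : ι → R} {g : κ → R} (hf : Summable fun a => ‖f a‖) (hg : Summable fun b => ‖g b‖)
    (hF : ∀ a b, F (a, b) = f a * g b) : ∑' p, F p = (∑' a, f a) * ∑' b, g b := by
  rw [tsum_mul_tsum_of_summable_norm hf hg]
  exact tsum_congr fun p => hF p.1 p.2

theorem tsum_prod_eq_mul_add_mul {R ι κ : Type*} [NormedRing R] [CompleteSpace R]
    {F : ι × κ → R} {f₁ f₂ : ι → R} {g₁ g₂ : κ → R}
    (hf₁ : Summable fun a => ‖f₁ a‖) (hg₁ : Summable fun b => ‖g₁ b‖)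
    (hf₂ : Summable fun a => ‖f₂ a‖) (hg₂ : Summable fun b => ‖g₂ b‖)
    (hF : ∀ a b, F (a, b) = f₁ a * g₁ b + f₂ a * g₂ b) :
    ∑' p, F p = (∑' a, f₁ a) * (∑' b, g₁ b) + (∑' a, f₂ a) * ∑' b, g₂ b := by
  rw [tsum_mul_tsum_of_summable_norm hf₁ hg₁, tsum_mul_tsum_of_summable_norm hf₂ hg₂,
    ← Summable.tsum_add (hf₁.mul_norm hg₁).of_norm (hf₂.mul_norm hg₂).of_norm]
  exact tsum_congr fun p => hF p.1 p.2

end IntSums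

section PowerSeries

theorem summable_abs_add_one_mul_pow_natAbs {r : ℝ} (hr0 : 0 ≤ r) (hr1 : r < 1) :
    Summable fun n : ℤ => (|(n : ℝ)| + 1) * r ^ n.natAbs := by
  have hnat : Summable fun k : ℕ => ((k : ℝ) + 1) * r ^ k := by
    have hr : ‖r‖ < 1 := by rwa [Real.norm_of_nonneg hr0]
    simpa [add_mul] using (summable_pow_mul_geometric_of_norm_lt_one 1 hr).add
      (summable_geometric_of_lt_one hr0 hr1)
  exact .of_nat_of_neg (hnat.congr fun k => by simp) (hnat.congr fun k => by simp)

variable {c : ℤ → ℂ} {e : ℤ → ℤ} {C : ℝ}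

theorem norm_mul_zpow_le (hc : ∀ n, ‖c n‖ ≤ C * (|(n : ℝ)| + 1)) (he0 : ∀ n, 0 ≤ e n)
    (he : ∀ n, |n| ≤ e n + 1) {r : ℝ} (hr0 : 0 < r) (hr1 : r ≤ 1) {x : ℂ} (hx : ‖x‖ ≤ r)
    (n : ℤ) : ‖c n * x ^ e n‖ ≤ C * r⁻¹ * ((|(n : ℝ)| + 1) * r ^ n.natAbs) := by
  obtain ⟨k, hk⟩ := Int.eq_ofNat_of_zero_le (he0 n)
  have hnk : n.natAbs ≤ k + 1 := by have := he n; rw [hk, Int.abs_eq_natAbs] at this; omega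
  have hxk : ‖x‖ ^ k ≤ r⁻¹ * r ^ n.natAbs :=
    calc ‖x‖ ^ k ≤ r ^ k := pow_le_pow_left₀ (norm_nonneg x) hx k
      _ ≤ r⁻¹ * r ^ n.natAbs := by
        rw [le_inv_mul_iff₀ hr0, ← pow_succ']
        exact pow_le_pow_of_le_one hr0.le hr1 hnk
  rw [norm_mul, hk, zpow_natCast, norm_pow]
  calc ‖c n‖ * ‖x‖ ^ k ≤ C * (|(n : ℝ)| + 1) * (r⁻¹ * r ^ n.natAbs) :=
        mul_le_mul (hc n) hxk (by positivity) ((norm_nonneg _).trans (hc n))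
    _ = C * r⁻¹ * ((|(n : ℝ)| + 1) * r ^ n.natAbs) := by ring

theorem summable_norm_mul_zpow (hc : ∀ n, ‖c n‖ ≤ C * (|(n : ℝ)| + 1)) (he0 : ∀ n, 0 ≤ e n)
    (he : ∀ n, |n| ≤ e n + 1) {x : ℂ} (hx : ‖x‖ < 1) :
    Summable fun n => ‖c n * x ^ e n‖ := by
  obtain ⟨r, hxr, hr1⟩ := exists_between hx
  have hr0 : 0 < r := (norm_nonneg x).trans_lt hxr
  exact .of_nonneg_of_le (fun n => norm_nonneg _)
    (norm_mul_zpow_le hc he0 he hr0 hr1.le hxr.le)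
    ((summable_abs_add_one_mul_pow_natAbs hr0.le hr1).mul_left (C * r⁻¹))

theorem analyticOnNhd_tsum_mul_zpow (hc : ∀ n, ‖c n‖ ≤ C * (|(n : ℝ)| + 1))
    (he0 : ∀ n, 0 ≤ e n) (he : ∀ n, |n| ≤ e n + 1) :
    AnalyticOnNhd ℂ (fun x => ∑' n, c n * x ^ e n) (Metric.ball 0 1) := by
  intro z hz
  obtain ⟨r, hzr, hr1⟩ := exists_between (mem_ball_zero_iff.mp hz)
  have hr0 : 0 < r := (norm_nonneg z).trans_lt hzr
  have hdiff : DifferentiableOn ℂ (fun x => ∑' n, c n * x ^ e n) (Metric.ball 0 r) :=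
    Complex.differentiableOn_tsum_of_summable_norm
      ((summable_abs_add_one_mul_pow_natAbs hr0.le hr1).mul_left (C * r⁻¹))
      (fun n => ((differentiable_id.zpow (.inr (he0 n))).const_mul (c n)).differentiableOn)
      Metric.isOpen_ball fun n w hw =>
        norm_mul_zpow_le hc he0 he hr0 hr1.le (mem_ball_zero_iff.mp hw).le n
  exact hdiff.analyticAt (Metric.isOpen_ball.mem_nhds (mem_ball_zero_iff.mpr hzr))

end PowerSeries

section Vanishing

variable {𝕜 : Type*} [NontriviallyNormedField 𝕜]

/- If `E = z ^ k * g` near `0` with `g 0 ≠ 0`, dividing the equation by `z ^ k` gives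
`g z * b z = d z * z ^ k * g (z ^ 2)`, so `k ≥ 1` would force `g 0 * b 0 = 0`. -/
theorem eventuallyEq_zero_of_mul_eq_mul_comp_sq {E b d : 𝕜 → 𝕜}
    (hE : AnalyticAt 𝕜 E 0) (hE0 : E 0 = 0) (hb : ContinuousAt b 0) (hb0 : b 0 ≠ 0)
    (hd : ContinuousAt d 0) (h : ∀ᶠ z in 𝓝[≠] 0, E z * b z = d z * E (z ^ 2)) :
    E =ᶠ[𝓝 0] 0 := by
  by_contra hne
  obtain ⟨k, hk⟩ := WithTop.ne_top_iff_exists.mp (mt analyticOrderAt_eq_top.mp hne)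
  obtain ⟨g, hg, hg0, hEg⟩ := hE.analyticOrderAt_eq_natCast.mp hk.symm
  simp only [sub_zero, smul_eq_mul] at hEg
  have hk0 : k ≠ 0 := by
    rintro rfl
    exact hg0 (by simpa [hE0] using hEg.self_of_nhds.symm)
  have hsq : Tendsto (fun z : 𝕜 => z ^ 2) (𝓝 0) (𝓝 0) := by
    simpa using (continuous_pow 2).tendsto (0 : 𝕜)
  have hcancel : (fun z => g z * b z) =ᶠ[𝓝[≠] 0] fun z => d z * z ^ k * g (z ^ 2) := by
    filter_upwards [h, nhdsWithin_le_nhds hEg, nhdsWithin_le_nhds (hsq.eventually hEg),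
      self_mem_nhdsWithin] with z hz hEz hEz2 hz0
    apply mul_left_cancel₀ (pow_ne_zero k hz0)
    rw [hEz, hEz2] at hz
    linear_combination hz + d z * z ^ k * g (z ^ 2) * (pow_mul_comm z 2 k).symm
  have hlim := ((hg.continuousAt.mul hb).eventuallyEq_nhds_iff_eventuallyEq_nhdsNE
    ((hd.mul (continuousAt_id.pow k)).mul
      (hg.continuousAt.comp_of_eq (continuousAt_id.pow 2) (by simp)))).mp hcancel
  exact mul_ne_zero hg0 hb0 (by simpa [zero_pow hk0] using hlim.self_of_nhds)

end Vanishing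

section Algebra

variable {K : Type*} [Field K]

theorem neg_one_zpow_sub (a b : ℤ) : (-1 : K) ^ (a - b) = (-1) ^ a * (-1) ^ b := by
  simp only [← Int.cast_negOnePow K, Int.negOnePow_sub, Units.val_mul, Int.cast_mul]

theorem neg_one_zpow_neg_add_one (n : ℤ) : (-1 : K) ^ (-(n + 1)) = -(-1) ^ n := by
  simp only [← Int.cast_negOnePow K, Int.negOnePow_neg, Int.negOnePow_succ, Units.val_neg,
    Int.cast_neg]

theorem zpow_mul_zpow_eq_sq_zpow_mul {x : K} (hx : x ≠ 0) {u v s t : ℤ}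
    (h : u + v = 2 * (s + t)) : x ^ u * x ^ v = (x ^ 2) ^ s * (x ^ 2) ^ t := by
  rw [← zpow_ofNat, ← zpow_mul, ← zpow_mul, ← zpow_add₀ hx, ← zpow_add₀ hx, h]
  ring_nf

theorem zpow_mul_zpow_eq_sq_zpow_mul_self {x : K} (hx : x ≠ 0) {u v s t : ℤ}
    (h : u + v = 2 * (s + t) + 1) : x ^ u * x ^ v = (x ^ 2) ^ s * (x ^ 2) ^ t * x := by
  rw [← zpow_ofNat, ← zpow_mul, ← zpow_mul, ← zpow_add₀ hx, ← zpow_add₀ hx,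
    ← zpow_add_one₀ hx, h]
  ring_nf

end Algebra

section Series

-- `θ₁'(0,q) = q ^ (1/4) * reducedThetaOneDeriv q` and `θ₂(0,q) = q ^ (1/4) * reducedThetaTwo q`.
noncomputable def reducedThetaOneDeriv (x : ℂ) : ℂ :=
  ∑' n : ℤ, (-1 : ℂ) ^ n * (2 * (n : ℂ) + 1) * x ^ (n ^ 2 + n)

noncomputable def reducedThetaTwo (x : ℂ) : ℂ := ∑' n : ℤ, x ^ (n ^ 2 + n)

theorem sq_add_self_nonneg (n : ℤ) : 0 ≤ n ^ 2 + n := by nlinarith [sq_nonneg (2 * n + 1)]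

theorem sq_sub_self_nonneg (n : ℤ) : 0 ≤ n ^ 2 - n := by nlinarith [sq_nonneg (2 * n - 1)]

theorem abs_le_sq_add_self_add_one (n : ℤ) : |n| ≤ n ^ 2 + n + 1 := by
  cases abs_cases n <;> nlinarith

theorem abs_le_sq_sub_self_add_one (n : ℤ) : |n| ≤ n ^ 2 - n + 1 := by
  cases abs_cases n <;> nlinarith

theorem abs_le_sq_add_one (n : ℤ) : |n| ≤ n ^ 2 + 1 := by cases abs_cases n <;> nlinarith

theorem norm_neg_one_zpow_mul_two_mul_add_one_le (n : ℤ) :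
    ‖(-1 : ℂ) ^ n * (2 * (n : ℂ) + 1)‖ ≤ 2 * (|(n : ℝ)| + 1) := by
  simp only [norm_mul, norm_zpow, norm_neg, norm_one, one_zpow, one_mul]
  calc ‖2 * (n : ℂ) + 1‖ ≤ ‖2 * (n : ℂ)‖ + ‖(1 : ℂ)‖ := norm_add_le _ _
    _ = 2 * |(n : ℝ)| + 1 := by
      simp only [Complex.norm_mul, Complex.norm_ofNat, Complex.norm_intCast, norm_one]
    _ ≤ 2 * (|(n : ℝ)| + 1) := by linarith

variable {x : ℂ}

theorem summable_reducedThetaOneDeriv_terms (hx : ‖x‖ < 1) :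
    Summable fun n : ℤ => ‖(-1 : ℂ) ^ n * (2 * (n : ℂ) + 1) * x ^ (n ^ 2 + n)‖ :=
  summable_norm_mul_zpow norm_neg_one_zpow_mul_two_mul_add_one_le sq_add_self_nonneg
    abs_le_sq_add_self_add_one hx

theorem summable_reducedThetaTwo_terms (hx : ‖x‖ < 1) :
    Summable fun n : ℤ => ‖x ^ (n ^ 2 + n)‖ := by
  simpa using summable_norm_mul_zpow (c := 1) (C := 1) (fun n => by simp)
    sq_add_self_nonneg abs_le_sq_add_self_add_one hx

theorem summable_thetaThree_terms (hx : ‖x‖ < 1) : Summable fun n : ℤ => ‖x ^ (n ^ 2)‖ := by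
  simpa using summable_norm_mul_zpow (c := 1) (C := 1) (fun n => by simp)
    sq_nonneg abs_le_sq_add_one hx

theorem summable_thetaFour_terms (hx : ‖x‖ < 1) :
    Summable fun n : ℤ => ‖(-1 : ℂ) ^ n * x ^ (n ^ 2)‖ :=
  summable_norm_mul_zpow (C := 1) (fun n => by simp) sq_nonneg abs_le_sq_add_one hx

theorem summable_alternating_sq_add_self_terms (hx : ‖x‖ < 1) :
    Summable fun n : ℤ => ‖(-1 : ℂ) ^ n * x ^ (n ^ 2 + n)‖ :=
  summable_norm_mul_zpow (C := 1) (fun n => by simp) sq_add_self_nonneg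
    abs_le_sq_add_self_add_one hx

theorem summable_alternating_sq_sub_self_terms (hx : ‖x‖ < 1) :
    Summable fun n : ℤ => ‖(-1 : ℂ) ^ n * x ^ (n ^ 2 - n)‖ :=
  summable_norm_mul_zpow (C := 1) (fun n => by simp) sq_sub_self_nonneg
    abs_le_sq_sub_self_add_one hx

theorem summable_alternating_two_mul_sq_terms (hx : ‖x‖ < 1) :
    Summable fun n : ℤ => ‖(-1 : ℂ) ^ n * (2 * (n : ℂ)) * x ^ (n ^ 2)‖ :=
  summable_norm_mul_zpow (C := 2) (fun n => by simp [Complex.norm_intCast]) sq_nonneg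
    abs_le_sq_add_one hx

-- This is `θ₁(0,q) = 0`, up to the factor `-i q ^ (1/4)`.
theorem tsum_alternating_sq_add_self_eq_zero (x : ℂ) :
    ∑' n : ℤ, (-1 : ℂ) ^ n * x ^ (n ^ 2 + n) = 0 :=
  tsum_int_eq_zero_of_antisymm fun n => by
    rw [neg_one_zpow_neg_add_one, show (-(n + 1)) ^ 2 + -(n + 1) = n ^ 2 + n by ring, neg_mul]

end Series

section Duplication

variable {x : ℂ}

theorem norm_sq_lt_one (hx : ‖x‖ < 1) : ‖x ^ 2‖ < 1 := by
  rw [norm_pow]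
  exact pow_lt_one₀ (norm_nonneg x) hx two_ne_zero

theorem reducedThetaTwo_sq (hx : ‖x‖ < 1) (hx0 : x ≠ 0) :
    reducedThetaTwo x ^ 2 = 2 * reducedThetaTwo (x ^ 2) * thetaThree (x ^ 2) := by
  have hy := norm_sq_lt_one hx
  rw [sq, reducedThetaTwo, reducedThetaTwo, thetaThree, tsum_mul_tsum_eq_add_of_parity
      (summable_reducedThetaTwo_terms hx) (summable_reducedThetaTwo_terms hx),
    tsum_prod_eq_mul (summable_reducedThetaTwo_terms hy) (summable_thetaThree_terms hy)
      fun a b => ?even,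
    tsum_prod_eq_mul (summable_thetaThree_terms hy) (summable_reducedThetaTwo_terms hy)
      fun a b => ?odd]
  · ring
  all_goals exact zpow_mul_zpow_eq_sq_zpow_mul hx0 (by ring)

theorem thetaThree_mul_thetaFour (hx : ‖x‖ < 1) (hx0 : x ≠ 0) :
    thetaThree x * thetaFour x = thetaFour (x ^ 2) ^ 2 := by
  have hy := norm_sq_lt_one hx
  have hodd : Summable fun a : ℤ => ‖-x * ((-1 : ℂ) ^ a * (x ^ 2) ^ (a ^ 2 - a))‖ := by
    simpa only [norm_mul] using (summable_alternating_sq_sub_self_terms hy).mul_left ‖-x‖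
  rw [thetaThree, thetaFour, thetaFour, sq, tsum_mul_tsum_eq_add_of_parity
      (summable_thetaThree_terms hx) (summable_thetaFour_terms hx),
    tsum_prod_eq_mul (summable_thetaFour_terms hy) (summable_thetaFour_terms hy)
      fun a b => ?even,
    tsum_prod_eq_mul hodd (summable_alternating_sq_add_self_terms hy) fun a b => ?odd,
    tsum_alternating_sq_add_self_eq_zero, mul_zero, add_zero]
  case even =>
    have h₁ : (-1 : ℂ) ^ (a - b) = (-1) ^ a * (-1) ^ b := neg_one_zpow_sub a b
    have h₂ := zpow_mul_zpow_eq_sq_zpow_mul hx0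
      (u := (a + b) ^ 2) (v := (a - b) ^ 2) (s := a ^ 2) (t := b ^ 2) (by ring)
    linear_combination (-1 : ℂ) ^ (a - b) * h₂ + (x ^ 2) ^ (a ^ 2) * (x ^ 2) ^ (b ^ 2) * h₁
  case odd =>
    have h₁ : (-1 : ℂ) ^ (a - b - 1) = -((-1) ^ a * (-1) ^ b) := by
      rw [sub_sub, neg_one_zpow_sub, zpow_add_one₀ (by norm_num)]
      ring
    have h₂ := zpow_mul_zpow_eq_sq_zpow_mul_self hx0
      (u := (a + b) ^ 2) (v := (a - b - 1) ^ 2) (s := a ^ 2 - a) (t := b ^ 2 + b) (by ring)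
    linear_combination (-1 : ℂ) ^ (a - b - 1) * h₂
      + (x ^ 2) ^ (a ^ 2 - a) * (x ^ 2) ^ (b ^ 2 + b) * x * h₁

theorem reducedThetaOneDeriv_mul_reducedThetaTwo (hx : ‖x‖ < 1) (hx0 : x ≠ 0) :
    reducedThetaOneDeriv x * reducedThetaTwo x
      = 2 * reducedThetaOneDeriv (x ^ 2) * thetaFour (x ^ 2) := by
  have hy := norm_sq_lt_one hx
  rw [reducedThetaOneDeriv, reducedThetaTwo, reducedThetaOneDeriv, thetaFour,
    tsum_mul_tsum_eq_add_of_parity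
      (summable_reducedThetaOneDeriv_terms hx) (summable_reducedThetaTwo_terms hx),
    tsum_prod_eq_mul_add_mul (summable_reducedThetaOneDeriv_terms hy)
      (summable_thetaFour_terms hy) (summable_alternating_sq_add_self_terms hy)
      (summable_alternating_two_mul_sq_terms hy) fun a b => ?even,
    tsum_prod_eq_mul_add_mul (summable_thetaFour_terms hy)
      (summable_reducedThetaOneDeriv_terms hy) (summable_alternating_two_mul_sq_terms hy)
      (summable_alternating_sq_add_self_terms hy) fun a b => ?odd,
    tsum_alternating_sq_add_self_eq_zero]
  · ring
  all_goals
    have h₁ : (-1 : ℂ) ^ (a + b) = (-1) ^ a * (-1) ^ b := zpow_add₀ (by norm_num) a b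
    push_cast
  case even =>
    have h₂ := zpow_mul_zpow_eq_sq_zpow_mul hx0 (u := (a + b) ^ 2 + (a + b))
      (v := (a - b) ^ 2 + (a - b)) (s := a ^ 2 + a) (t := b ^ 2) (by ring)
    linear_combination (2 * ((a : ℂ) + b) + 1) * ((-1 : ℂ) ^ (a + b) * h₂
      + (x ^ 2) ^ (a ^ 2 + a) * (x ^ 2) ^ (b ^ 2) * h₁)
  case odd =>
    have h₂ := zpow_mul_zpow_eq_sq_zpow_mul hx0 (u := (a + b) ^ 2 + (a + b))
      (v := (a - b - 1) ^ 2 + (a - b - 1)) (s := a ^ 2) (t := b ^ 2 + b) (by ring)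
    linear_combination (2 * ((a : ℂ) + b) + 1) * ((-1 : ℂ) ^ (a + b) * h₂
      + (x ^ 2) ^ (a ^ 2) * (x ^ 2) ^ (b ^ 2 + b) * h₁)

end Duplication

section Defect

theorem analyticOnNhd_reducedThetaOneDeriv :
    AnalyticOnNhd ℂ reducedThetaOneDeriv (Metric.ball 0 1) :=
  analyticOnNhd_tsum_mul_zpow norm_neg_one_zpow_mul_two_mul_add_one_le sq_add_self_nonneg
    abs_le_sq_add_self_add_one

theorem analyticOnNhd_reducedThetaTwo : AnalyticOnNhd ℂ reducedThetaTwo (Metric.ball 0 1) := by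
  unfold reducedThetaTwo
  simpa using analyticOnNhd_tsum_mul_zpow (c := 1) (C := 1) (fun n => by simp)
    sq_add_self_nonneg abs_le_sq_add_self_add_one

theorem analyticOnNhd_thetaThree : AnalyticOnNhd ℂ thetaThree (Metric.ball 0 1) := by
  unfold thetaThree
  simpa using analyticOnNhd_tsum_mul_zpow (c := 1) (C := 1) (fun n => by simp)
    sq_nonneg abs_le_sq_add_one

theorem analyticOnNhd_thetaFour : AnalyticOnNhd ℂ thetaFour (Metric.ball 0 1) :=
  analyticOnNhd_tsum_mul_zpow (C := 1) (fun n => by simp) sq_nonneg abs_le_sq_add_one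

noncomputable def jacobiDefect (x : ℂ) : ℂ :=
  reducedThetaOneDeriv x - reducedThetaTwo x * thetaThree x * thetaFour x

variable {x : ℂ}

theorem jacobiDefect_mul_reducedThetaTwo (hx : ‖x‖ < 1) (hx0 : x ≠ 0) :
    jacobiDefect x * reducedThetaTwo x = 2 * thetaFour (x ^ 2) * jacobiDefect (x ^ 2) := by
  rw [jacobiDefect, jacobiDefect]
  linear_combination reducedThetaOneDeriv_mul_reducedThetaTwo hx hx0
    - thetaThree x * thetaFour x * reducedThetaTwo_sq hx hx0
    - 2 * reducedThetaTwo (x ^ 2) * thetaThree (x ^ 2) * thetaThree_mul_thetaFour hx hx0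

theorem sq_add_self_ne_zero {n : ℤ} (hn : n ∉ ({0, -1} : Finset ℤ)) : n ^ 2 + n ≠ 0 := by
  simp only [Finset.mem_insert, Finset.mem_singleton, not_or] at hn
  rw [sq, ← mul_add_one]
  exact mul_ne_zero hn.1 (by omega)

theorem reducedThetaOneDeriv_zero : reducedThetaOneDeriv 0 = 2 := by
  rw [reducedThetaOneDeriv, tsum_eq_sum (s := {0, -1}) fun n hn => by
    rw [zero_zpow _ (sq_add_self_ne_zero hn), mul_zero], Finset.sum_pair (by norm_num)]
  norm_num

theorem reducedThetaTwo_zero : reducedThetaTwo 0 = 2 := by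
  rw [reducedThetaTwo, tsum_eq_sum (s := {0, -1}) fun n hn => zero_zpow _ (sq_add_self_ne_zero hn),
    Finset.sum_pair (by norm_num)]
  norm_num

theorem thetaThree_zero : thetaThree 0 = 1 := by
  rw [thetaThree, tsum_eq_single 0 fun n hn => zero_zpow _ (pow_ne_zero 2 hn)]
  norm_num

theorem thetaFour_zero : thetaFour 0 = 1 := by
  rw [thetaFour, tsum_eq_single 0 fun n hn => by rw [zero_zpow _ (pow_ne_zero 2 hn), mul_zero]]
  norm_num

theorem jacobiDefect_zero : jacobiDefect 0 = 0 := by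
  rw [jacobiDefect, reducedThetaOneDeriv_zero, reducedThetaTwo_zero, thetaThree_zero,
    thetaFour_zero]
  norm_num

theorem analyticOnNhd_jacobiDefect : AnalyticOnNhd ℂ jacobiDefect (Metric.ball 0 1) :=
  analyticOnNhd_reducedThetaOneDeriv.sub
    ((analyticOnNhd_reducedThetaTwo.mul analyticOnNhd_thetaThree).mul analyticOnNhd_thetaFour)

theorem jacobiDefect_eq_zero (hx : ‖x‖ < 1) : jacobiDefect x = 0 := by
  have h0 : (0 : ℂ) ∈ Metric.ball (0 : ℂ) 1 := Metric.mem_ball_self one_pos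
  refine analyticOnNhd_jacobiDefect.eqOn_zero_of_preconnected_of_eventuallyEq_zero
    (convex_ball 0 1).isPreconnected h0 ?_ (mem_ball_zero_iff.mpr hx)
  refine eventuallyEq_zero_of_mul_eq_mul_comp_sq (d := fun z => 2 * thetaFour (z ^ 2))
    (analyticOnNhd_jacobiDefect 0 h0) jacobiDefect_zero
    (analyticOnNhd_reducedThetaTwo 0 h0).continuousAt (by rw [reducedThetaTwo_zero]; norm_num)
    (continuousAt_const.mul ((analyticOnNhd_thetaFour 0 h0).continuousAt.comp_of_eq
      (continuousAt_id.pow 2) (by simp))) ?_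
  filter_upwards [nhdsWithin_le_nhds (Metric.isOpen_ball.mem_nhds h0), self_mem_nhdsWithin]
    with z hz hz0
  exact jacobiDefect_mul_reducedThetaTwo (mem_ball_zero_iff.mp hz) hz0

end Defect

section Constants

variable {q : ℂ}

theorem cpow_add_one_half_sq (hq : q ≠ 0) (n : ℤ) :
    q ^ (((n : ℂ) + 1 / 2) ^ 2) = q ^ (1 / 4 : ℂ) * q ^ (n ^ 2 + n) := by
  rw [show ((n : ℂ) + 1 / 2) ^ 2 = 1 / 4 + ((n ^ 2 + n : ℤ) : ℂ) by push_cast; ring,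
    Complex.cpow_add _ _ hq, Complex.cpow_intCast]

theorem thetaTwo_eq_cpow_mul_reducedThetaTwo (hq : q ≠ 0) :
    thetaTwo q = q ^ (1 / 4 : ℂ) * reducedThetaTwo q := by
  rw [thetaTwo, reducedThetaTwo, ← tsum_mul_left]
  exact tsum_congr (cpow_add_one_half_sq hq)

theorem two_mul_tsum_eq_cpow_mul_reducedThetaOneDeriv (hq : q ≠ 0) (hq1 : ‖q‖ < 1) :
    2 * ∑' n : ℕ, (-1 : ℂ) ^ n * (2 * (n : ℂ) + 1) * q ^ (((n : ℂ) + 1 / 2) ^ 2)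
      = q ^ (1 / 4 : ℂ) * reducedThetaOneDeriv q := by
  have hterm (n : ℕ) : (-1 : ℂ) ^ n * (2 * (n : ℂ) + 1) * q ^ (((n : ℂ) + 1 / 2) ^ 2)
      = q ^ (1 / 4 : ℂ)
        * ((-1 : ℂ) ^ (n : ℤ) * (2 * ((n : ℤ) : ℂ) + 1) * q ^ ((n : ℤ) ^ 2 + n)) := by
    rw [← Int.cast_natCast, cpow_add_one_half_sq hq, zpow_natCast]
    ring
  have hsymm (n : ℤ) : (-1 : ℂ) ^ (-(n + 1)) * (2 * ((-(n + 1) : ℤ) : ℂ) + 1)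
      * q ^ ((-(n + 1)) ^ 2 + -(n + 1)) = (-1 : ℂ) ^ n * (2 * (n : ℂ) + 1) * q ^ (n ^ 2 + n) := by
    rw [neg_one_zpow_neg_add_one, show (-(n + 1)) ^ 2 + -(n + 1) = n ^ 2 + n by ring]
    push_cast
    ring
  rw [tsum_congr hterm, tsum_mul_left, reducedThetaOneDeriv,
    tsum_int_eq_two_mul_tsum_nat (summable_reducedThetaOneDeriv_terms hq1).of_norm hsymm]
  ring

end Constants

end JacobiDerivativeFormula

open JacobiDerivativeFormula

/-- The Jacobi derivative formula
`θ₁'(0,q) = 2 Σ_{n≥0} (-1)^n (2n+1) q^{(n+1/2)²} = θ₂(0,q)θ₃(0,q)θ₄(0,q)`. -/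
theorem jacobi_derivative_formula (q : ℂ) (h0 : 0 < ‖q‖)
    (h1 : ‖q‖ < 1) :
    2 * ∑' n : ℕ, (-1 : ℂ) ^ n * (2 * (n : ℂ) + 1) * q ^ (((n : ℂ) + 1 / 2) ^ 2) =
      thetaTwo q * thetaThree q * thetaFour q := by
  have hq : q ≠ 0 := norm_pos_iff.mp h0
  have hformula := sub_eq_zero.mp (jacobiDefect_eq_zero h1)
  rw [two_mul_tsum_eq_cpow_mul_reducedThetaOneDeriv hq h1,
    thetaTwo_eq_cpow_mul_reducedThetaTwo hq, hformula]
  ring
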